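/- Let C₂ be the two-element cluster (Kripke frame on {0,1} with total accessibility). The formula □p ∨ (¬p ∧ ◇p) is p-monotone on C₂, but it is not equivalent on C₂ to any positive formula (formula in negation normal form without negated variables). -/
import Mathlib


/-- Modal formulas in negation normal form. -/
inductive Fm where
  | var : ℕ → Fm
  | nvar : ℕ → Fm
  | bot : Fm
  | top : Fm
  | and : Fm → Fm → Fm
  | or : Fm → Fm → Fm
  | dia : Fm → Fm
  | box : Fm → Fm

/-- Kripke semantics for formulas in negation normal form. -/
def ksatN {W : Type*} (R : W → W → Prop) (ϑ : ℕ → Set W) : Fm → W → Prop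
  | .var n, w => w ∈ ϑ n
  | .nvar n, w => w ∉ ϑ n
  | .bot, _ => False
  | .top, _ => True
  | .and a b, w => ksatN R ϑ a w ∧ ksatN R ϑ b w
  | .or a b, w => ksatN R ϑ a w ∨ ksatN R ϑ b w
  | .dia a, w => ∃ v, R w v ∧ ksatN R ϑ a v
  | .box a, w => ∀ v, R w v → ksatN R ϑ a v

/-- A formula is positive if it contains no negated variables. -/
def Fm.positive : Fm → Prop
  | .var _ => True
  | .nvar _ => False
  | .bot => True
  | .top => True
  | .and a b => a.positive ∧ b.positive
  | .or a b => a.positive ∧ b.positive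
  | .dia a => a.positive
  | .box a => a.positive

/-- The formula `□p ∨ (¬p ∧ ◇p)` (with `p` the variable `0`). -/

def th1 : ℕ → Set (Fin 2) := fun n => if n = 0 then {1} else ∅
def th2 : ℕ → Set (Fin 2) := fun n => if n = 0 then {0} else ∅

lemma sim : ∀ (α : Fm), α.positive → ∀ w w' : Fin 2, ¬(w = 1 ∧ w' = 1) →
    ksatN (fun _ _ => True) th1 α w → ksatN (fun _ _ => True) th2 α w' := by
  intro α
  induction α with
  | var n =>
    intro _ w w' hz hw
    simp only [ksatN, th1, th2] at *
    rcases eq_or_ne n 0 with h0 | h0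
    · subst h0; simp at hw ⊢
      subst hw
      omega
    · simp [h0] at hw
  | nvar n => intro hp; exact absurd hp (by simp [Fm.positive])
  | bot => intro _ w w' _ hw; exact hw.elim
  | top => intro _ w w' _ _; trivial
  | and a b iha ihb =>
    intro hp w w' hz hw
    exact ⟨iha hp.1 w w' hz hw.1, ihb hp.2 w w' hz hw.2⟩
  | or a b iha ihb =>
    intro hp w w' hz hw
    rcases hw with hw | hw
    · exact Or.inl (iha hp.1 w w' hz hw)
    · exact Or.inr (ihb hp.2 w w' hz hw)
  | dia a ih =>
    intro hp w w' _ hw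
    rcases hw with ⟨v, _, hv⟩
    exact ⟨0, trivial, ih hp v 0 (by simp) hv⟩
  | box a ih =>
    intro hp w w' _ hw
    intro v' _
    exact ih hp 0 v' (by simp) (hw 0 trivial)

def psiC2 : Fm := .or (.box (.var 0)) (.and (.nvar 0) (.dia (.var 0)))

/-- On the two-element cluster `C₂`, the formula `□p ∨ (¬p ∧ ◇p)` is `p`-monotone but
not equivalent to any positive formula. -/
theorem cluster2_monotone_not_positive :
    (∀ (ϑ₁ ϑ₂ : ℕ → Set (Fin 2)), ϑ₁ 0 ⊆ ϑ₂ 0 → (∀ n, n ≠ 0 → ϑ₁ n = ϑ₂ n) →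
      ∀ w : Fin 2, ksatN (fun _ _ => True) ϑ₁ psiC2 w →
        ksatN (fun _ _ => True) ϑ₂ psiC2 w) ∧
    ¬ ∃ α : Fm, α.positive ∧
        ∀ (ϑ : ℕ → Set (Fin 2)) (w : Fin 2),
          ksatN (fun _ _ => True) ϑ psiC2 w ↔ ksatN (fun _ _ => True) ϑ α w := by
  constructor
  · intro ϑ₁ ϑ₂ hsub _ w h
    rcases h with h | ⟨hnp, v, _, hv⟩
    · exact Or.inl fun v _ => hsub (h v trivial)
    · by_cases hw : w ∈ ϑ₂ 0
      · refine Or.inl fun u _ => ?_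
        have hvw : v ≠ w := fun e => hnp (e ▸ hv)
        have : u = w ∨ u = v := by omega
        rcases this with rfl | rfl
        · exact hw
        · exact hsub hv
      · exact Or.inr ⟨hw, v, trivial, hsub hv⟩
  · rintro ⟨α, hpos, heq⟩
    have h1 : ksatN (fun _ _ => True) th1 psiC2 0 := by
      refine Or.inr ⟨?_, 1, trivial, ?_⟩ <;> simp [ksatN, th1]
    have h2 : ksatN (fun _ _ => True) th2 α 0 :=
      sim α hpos 0 0 (by simp) ((heq th1 0).mp h1)
    have h3 := (heq th2 0).mpr h2
    rcases h3 with h | ⟨hnp, _⟩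
    · have := h 1 trivial
      simp [ksatN, th2] at this
    · exact hnp (by simp [th2])
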